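/- arXiv:1203.5652 — 6 statements merged into one kernel-verified Lean document; each statement's English description precedes it below -/
import Mathlib

section
/- Let G be a group acting on a set X and F a finite subset of X. If every point of F has an infinite G-orbit, then there exists g in G such that g·F ∩ F = ∅. -/
open Pointwise

theorem neumann_finite_set_displacement
    {G X : Type*} [Group G] [MulAction G X] (F : Finset X)
    (h : ∀ x ∈ F, (MulAction.orbit G x).Infinite) :
    ∃ g : G, ∀ x ∈ F, g • x ∉ F := by
  classical
  by_contra hc
  push_neg at hc
  set s : Finset (X × X) := (F ×ˢ F).filter (fun p => p.2 ∈ MulAction.orbit G p.1) with hs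
  set c : X × X → G := fun p =>
    if hp : p.2 ∈ MulAction.orbit G p.1 then hp.choose else 1 with hcdef
  have hcovers : (⋃ p ∈ s, (c p) • (MulAction.stabilizer G p.1 : Set G) : Set G)
      = Set.univ := by
    ext a
    simp only [Set.mem_iUnion, Set.mem_univ, iff_true]
    obtain ⟨x, hxF, hax⟩ := hc a
    have horb : (a • x : X) ∈ MulAction.orbit G x := ⟨a, rfl⟩
    refine ⟨(x, a • x), ?_, ?_⟩
    · simp [hs, Finset.mem_filter, Finset.mem_product, hxF, hax, horb]
    · have hcs : c (x, a • x) • x = a • x := by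
        simp only [hcdef]
        rw [dif_pos horb]
        exact horb.choose_spec
      rw [mem_leftCoset_iff]
      simp only [SetLike.mem_coe, MulAction.mem_stabilizer_iff, mul_smul]
      exact inv_smul_eq_iff.mpr hcs.symm
  obtain ⟨k, hk, hfi⟩ := Subgroup.exists_finiteIndex_of_leftCoset_cover hcovers
  have hk1 : k.1 ∈ F := by
    simp only [hs, Finset.mem_filter, Finset.mem_product] at hk
    exact hk.1.1
  have hinf := h k.1 hk1
  have : (MulAction.stabilizer G k.1).index = (MulAction.orbit G k.1).ncard :=
    MulAction.index_stabilizer G k.1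
  rw [hinf.ncard] at this
  exact hfi.index_ne_zero this
end

section
/- Let G be a group acting on a set X and F₁, F₂ finite subsets of X. If every point of F₁ ∪ F₂ has an infinite G-orbit, then there exists g ∈ G such that g·F₁ ∩ F₂ = ∅. -/
open scoped Pointwise

theorem neumann_two_finite_sets_displacement
    {G X : Type*} [Group G] [MulAction G X] (F₁ F₂ : Finset X)
    (h₁ : ∀ x ∈ F₁, (MulAction.orbit G x).Infinite)
    (h₂ : ∀ x ∈ F₂, (MulAction.orbit G x).Infinite) :
    ∃ g : G, ∀ x ∈ F₁, g • x ∉ F₂ := by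
  classical
  by_contra hcon
  push_neg at hcon
  -- cover G by cosets of stabilizers
  let s : Finset (X × X) := (F₁ ×ˢ F₂).filter (fun p => ∃ g : G, g • p.1 = p.2)
  let H : X × X → Subgroup G := fun p => MulAction.stabilizer G p.1
  let gg : X × X → G := fun p =>
    if h : ∃ g : G, g • p.1 = p.2 then h.choose else 1
  have hcovers : ⋃ p ∈ s, (gg p) • (H p : Set G) = Set.univ := by
    rw [Set.eq_univ_iff_forall]
    intro u
    obtain ⟨x, hx, hux⟩ := hcon u
    have hex : ∃ g : G, g • (x, u • x).1 = (x, u • x).2 := ⟨u, rfl⟩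
    have hmem : (x, u • x) ∈ s := by
      simp only [s, Finset.mem_filter, Finset.mem_product]
      exact ⟨⟨hx, hux⟩, hex⟩
    refine Set.mem_iUnion₂.mpr ⟨(x, u • x), hmem, ?_⟩
    rw [mem_leftCoset_iff]
    have hgg : gg (x, u • x) • x = u • x := by
      simp only [gg, dif_pos hex]
      exact hex.choose_spec
    simp only [H, SetLike.mem_coe, MulAction.mem_stabilizer_iff, mul_smul, inv_smul_eq_iff]
    exact hgg.symm
  obtain ⟨p, hp, hfi⟩ := Subgroup.exists_finiteIndex_of_leftCoset_cover hcovers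
  have hpF : p.1 ∈ F₁ := by
    simp only [s, Finset.mem_filter, Finset.mem_product] at hp
    exact hp.1.1
  have : Finite (G ⧸ MulAction.stabilizer G p.1) := @Subgroup.finite_quotient_of_finiteIndex G _ _ hfi
  have : (MulAction.orbit G p.1).Finite := by
    have e := MulAction.orbitEquivQuotientStabilizer G p.1
    exact Set.finite_coe_iff.mp (Finite.of_equiv _ e.symm)
  exact absurd this (h₁ p.1 hpF)
end

section
/- If a countable group G acts highly transitively on a countable set X and K is a normal subgroup of G, then the action of K on X is either trivial or highly transitive. -/
/-- An action of `G` on `X` is highly transitive if for every `k` it is transitive on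
ordered `k`-tuples of pairwise distinct elements. -/
def IsHighlyTransitive (G X : Type*) [Group G] [MulAction G X] : Prop :=
  ∀ (k : ℕ) (x y : Fin k ↪ X), ∃ g : G, ∀ i, g • x i = y i

/-- From high transitivity: realize any injective-on-a-finset function by a group element. -/
private lemma lemA {G X : Type*} [Group G] [MulAction G X]
    (hG : IsHighlyTransitive G X) (S : Finset X) (σ : X → X)
    (hσ : Set.InjOn σ ↑S) : ∃ g : G, ∀ x ∈ S, g • x = σ x := by
  classical
  set n := S.card with hn
  let e : Fin n ≃ S := S.equivFin.symm
  let xe : Fin n ↪ X := ⟨fun i => (e i : X), fun i j hij => e.injective (Subtype.ext hij)⟩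
  have hxe : ∀ i, xe i ∈ S := fun i => (e i).2
  let ye : Fin n ↪ X := ⟨fun i => σ (xe i), by
    intro i j hij
    exact xe.injective (hσ (hxe i) (hxe j) hij)⟩
  obtain ⟨g, hg⟩ := hG n xe ye
  refine ⟨g, fun a ha => ?_⟩
  have := hg (e.symm ⟨a, ha⟩)
  change g • ((e (e.symm ⟨a, ha⟩) : S) : X) = σ ((e (e.symm ⟨a, ha⟩) : S) : X) at this
  rwa [Equiv.apply_symm_apply] at this

/-- From high transitivity: map any injective tuple indexed by a fintype to any other. -/
private lemma lemA' {G X : Type*} [Group G] [MulAction G X]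
    (hG : IsHighlyTransitive G X) {ι : Type} [Fintype ι] (x y : ι → X)
    (hx : Function.Injective x) (hy : Function.Injective y) :
    ∃ g : G, ∀ i, g • x i = y i := by
  classical
  let e := Fintype.equivFin ι
  obtain ⟨g, hg⟩ := hG (Fintype.card ι) ⟨x ∘ e.symm, hx.comp e.symm.injective⟩
    ⟨y ∘ e.symm, hy.comp e.symm.injective⟩
  refine ⟨g, fun i => ?_⟩
  simpa using hg (e i)

/-- Key lemma: a normal subgroup containing an element moving some point contains, for
any finite tuple `e` and any `u ≠ v` outside it, an element fixing `e` pointwise and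
sending `u` to `v`. -/
private lemma keyL {G X : Type*} [Group G] [MulAction G X] [Infinite X]
    (hG : IsHighlyTransitive G X) (K : Subgroup G) [hN : K.Normal]
    (k0 : G) (hk0K : k0 ∈ K) (a0 : X) (ha0 : k0 • a0 ≠ a0)
    (n : ℕ) (e : Fin n ↪ X) (u v : X)
    (hu : ∀ i, u ≠ e i) (hv : ∀ i, v ≠ e i) (huv : u ≠ v) :
    ∃ c ∈ K, (∀ i, c • (e i : X) = e i) ∧ c • u = v := by
  classical
  set b0 : X := k0 • a0 with hb0
  have hab : b0 ≠ a0 := ha0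
  -- choose fresh tuple p avoiding a small bad set
  let bad1 : Finset X := {a0, b0, k0 • a0, k0 • b0}
  have hinf : Infinite {x : X // x ∉ bad1} := by
    have h1 : (↑bad1 : Set X).Finite := bad1.finite_toSet
    have h2 : (↑bad1 : Set X)ᶜ.Infinite := h1.infinite_compl
    exact h2.to_subtype
  let p0 : Fin n ↪ {x : X // x ∉ bad1} :=
    (Fin.valEmbedding).trans (Infinite.natEmbedding _)
  let p : Fin n ↪ X := p0.trans (Function.Embedding.subtype _)
  have hp : ∀ i, p i ∉ bad1 := fun i => (p0 i).2
  have hpa0 : ∀ i, p i ≠ a0 := by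
    intro i h; exact hp i (by simp [bad1, h])
  have hpb0 : ∀ i, p i ≠ b0 := by
    intro i h; exact hp i (by simp [bad1, h])
  have hqa0 : ∀ i, k0⁻¹ • p i ≠ a0 := by
    intro i h
    have : p i = k0 • a0 := by rw [← h, smul_inv_smul]
    exact hp i (by simp [bad1, this])
  have hqb0 : ∀ i, k0⁻¹ • p i ≠ b0 := by
    intro i h
    have : p i = k0 • b0 := by rw [← h, smul_inv_smul]
    exact hp i (by simp [bad1, this])
  let P : Finset X := Finset.image p Finset.univ
  let Q : Finset X := Finset.image (fun i => k0⁻¹ • p i) Finset.univ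
  -- choose fresh points s then t
  obtain ⟨s, hs⟩ := Infinite.exists_notMem_finset
    (P ∪ Q ∪ {a0, b0} ∪ Finset.image (fun x => k0⁻¹ • x) P)
  obtain ⟨t, ht⟩ := Infinite.exists_notMem_finset
    (P ∪ Q ∪ {a0, b0, s, k0 • s})
  simp only [Finset.mem_union, Finset.mem_insert, Finset.mem_singleton, not_or] at hs ht
  obtain ⟨⟨⟨hsP, hsQ⟩, hsa0, hsb0⟩, hsk⟩ := hs
  obtain ⟨⟨htP, htQ⟩, hta0, htb0, hts, htks⟩ := ht
  have hk0sP : ∀ x ∈ P, k0 • s ≠ x := by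
    intro x hx h
    apply hsk
    rw [Finset.mem_image]
    exact ⟨x, hx, by rw [← h, inv_smul_smul]⟩
  -- the partial map σ
  let σ : X → X := fun x => if x = a0 then s else if x = b0 then t else x
  have hσa0 : σ a0 = s := by simp [σ]
  have hσb0 : σ b0 = t := by simp [σ, hab]
  have hσPQ : ∀ x, x ∈ P ∪ Q → σ x = x := by
    intro x hx
    rcases Finset.mem_union.mp hx with hx | hx <;>
      obtain ⟨i, -, rfl⟩ := Finset.mem_image.mp hx
    · simp [σ, hpa0 i, hpb0 i]
    · simp [σ, hqa0 i, hqb0 i]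
  set S0 : Finset X := P ∪ Q ∪ {a0, b0} with hS0
  have hσinj : Set.InjOn σ ↑S0 := by
    intro x hx y hy hxy
    have hmem : ∀ z : X, z ∈ S0 → z = a0 ∨ z = b0 ∨ z ∈ P ∪ Q := by
      intro z hz
      simp only [hS0, Finset.mem_union, Finset.mem_insert, Finset.mem_singleton] at hz ⊢
      tauto
    have hnot : ∀ z ∈ P ∪ Q, σ z ≠ s ∧ σ z ≠ t := by
      intro z hz
      rw [hσPQ z hz]
      rcases Finset.mem_union.mp hz with h | h
      · exact ⟨fun h' => hsP (h' ▸ h), fun h' => htP (h' ▸ h)⟩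
      · exact ⟨fun h' => hsQ (h' ▸ h), fun h' => htQ (h' ▸ h)⟩
    rcases hmem x (by exact_mod_cast hx) with rfl | rfl | hxm <;>
      rcases hmem y (by exact_mod_cast hy) with rfl | rfl | hym
    · rfl
    · rw [hσa0, hσb0] at hxy; exact absurd hxy.symm hts
    · rw [hσa0] at hxy; exact absurd hxy.symm (hnot y hym).1
    · rw [hσa0, hσb0] at hxy; exact absurd hxy hts
    · rfl
    · rw [hσb0] at hxy; exact absurd hxy.symm (hnot y hym).2
    · rw [hσa0] at hxy; exact absurd hxy (hnot x hxm).1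
    · rw [hσb0] at hxy; exact absurd hxy (hnot x hxm).2
    · rwa [hσPQ x hxm, hσPQ y hym] at hxy
  obtain ⟨g, hg⟩ := lemA hG S0 σ hσinj
  have hga0 : g • a0 = s := by
    rw [hg a0 (by simp [hS0]), hσa0]
  have hgb0 : g • b0 = t := by
    rw [hg b0 (by simp [hS0]), hσb0]
  have hgPQ : ∀ x ∈ P ∪ Q, g • x = x := by
    intro x hx
    have hxS : x ∈ S0 := by rw [hS0]; exact Finset.mem_union_left _ hx
    rw [hg x hxS, hσPQ x hx]
  have hpP : ∀ i, p i ∈ P := fun i => Finset.mem_image.mpr ⟨i, Finset.mem_univ i, rfl⟩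
  have hqQ : ∀ i, k0⁻¹ • p i ∈ Q := fun i => Finset.mem_image.mpr ⟨i, Finset.mem_univ i, rfl⟩
  -- the commutator c0
  set c0 : G := g * k0 * g⁻¹ * k0⁻¹ with hc0def
  have hc0K : c0 ∈ K := by
    have h1 : g * k0 * g⁻¹ ∈ K := hN.conj_mem k0 hk0K g
    have h2 : k0⁻¹ ∈ K := inv_mem hk0K
    rw [hc0def]; exact mul_mem h1 h2
  have hc0smul : ∀ z : X, c0 • z = g • (k0 • (g⁻¹ • (k0⁻¹ • z))) := by
    intro z; simp [hc0def, mul_smul]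
  have hc0p : ∀ i, c0 • p i = p i := by
    intro i
    rw [hc0smul]
    have hq : g • (k0⁻¹ • p i) = k0⁻¹ • p i := hgPQ _ (Finset.mem_union_right _ (hqQ i))
    have : g⁻¹ • (k0⁻¹ • p i) = k0⁻¹ • p i := by
      conv_lhs => rw [← hq]
      rw [inv_smul_smul]
    rw [this, smul_inv_smul]
    exact hgPQ _ (Finset.mem_union_left _ (hpP i))
  set u0 : X := k0 • s with hu0
  set v0 : X := t with hv0
  have hc0u0 : c0 • u0 = v0 := by
    rw [hc0smul, hu0, inv_smul_smul]
    have : g⁻¹ • s = a0 := by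
      conv_lhs => rw [← hga0]
      rw [inv_smul_smul]
    rw [this, ← hb0, hgb0]
  -- conjugate the configuration onto (e, u, v)
  have hu0P : ∀ i, u0 ≠ p i := fun i => hk0sP (p i) (hpP i)
  have hv0P : ∀ i, v0 ≠ p i := fun i h => htP (h ▸ hpP i)
  have hu0v0 : u0 ≠ v0 := fun h => htks h.symm
  let x' : Fin n ⊕ Bool → X := Sum.elim p (fun b => if b then u0 else v0)
  let y' : Fin n ⊕ Bool → X := Sum.elim e (fun b => if b then u else v)
  have hx' : Function.Injective x' := by
    intro a b hab'
    rcases a with i | bi <;> rcases b with j | bj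
    · exact congrArg Sum.inl (p.injective hab')
    · exfalso; cases bj <;> simp only [x', Sum.elim_inl, Sum.elim_inr, if_true, if_false,
        Bool.false_eq_true, ite_false, ite_true] at hab'
      · exact hv0P i hab'.symm
      · exact hu0P i hab'.symm
    · exfalso; cases bi <;> simp only [x', Sum.elim_inl, Sum.elim_inr, if_true, if_false,
        Bool.false_eq_true, ite_false, ite_true] at hab'
      · exact hv0P j hab'
      · exact hu0P j hab'
    · cases bi <;> cases bj <;> simp only [x', Sum.elim_inr, if_true, if_false,
        Bool.false_eq_true, ite_false, ite_true] at hab' <;> first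
        | rfl
        | exact absurd hab'.symm hu0v0
        | exact absurd hab' hu0v0
  have hy' : Function.Injective y' := by
    intro a b hab'
    rcases a with i | bi <;> rcases b with j | bj
    · exact congrArg Sum.inl (e.injective hab')
    · exfalso; cases bj <;> simp only [y', Sum.elim_inl, Sum.elim_inr, if_true, if_false,
        Bool.false_eq_true, ite_false, ite_true] at hab'
      · exact hv i hab'.symm
      · exact hu i hab'.symm
    · exfalso; cases bi <;> simp only [y', Sum.elim_inl, Sum.elim_inr, if_true, if_false,
        Bool.false_eq_true, ite_false, ite_true] at hab'
      · exact hv j hab'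
      · exact hu j hab'
    · cases bi <;> cases bj <;> simp only [y', Sum.elim_inr, if_true, if_false,
        Bool.false_eq_true, ite_false, ite_true] at hab' <;> first
        | rfl
        | exact absurd hab'.symm huv
        | exact absurd hab' huv
  obtain ⟨h, hh⟩ := lemA' hG x' y' hx' hy'
  have hhp : ∀ i, h • p i = e i := fun i => hh (Sum.inl i)
  have hhu0 : h • u0 = u := by simpa [x', y'] using hh (Sum.inr true)
  have hhv0 : h • v0 = v := by simpa [x', y'] using hh (Sum.inr false)
  refine ⟨h * c0 * h⁻¹, hN.conj_mem c0 hc0K h, ?_, ?_⟩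
  · intro i
    have h1 : h⁻¹ • (e i : X) = p i := by
      conv_lhs => rw [← hhp i]
      rw [inv_smul_smul]
    rw [mul_smul, mul_smul, h1, hc0p i, hhp i]
  · have h1 : h⁻¹ • u = u0 := by
      conv_lhs => rw [← hhu0]
      rw [inv_smul_smul]
    rw [mul_smul, mul_smul, h1, hc0u0, hhv0]

theorem normal_subgroup_trivial_or_highly_transitive
    {G X : Type*} [Group G] [MulAction G X] [Countable G] [Countable X] [Infinite X]
    (hG : IsHighlyTransitive G X) (K : Subgroup G) [K.Normal] :
    (∀ (k : K) (x : X), (k : G) • x = x) ∨ IsHighlyTransitive K X := by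
  classical
  by_cases htriv : ∀ (k : K) (x : X), (k : G) • x = x
  · exact Or.inl htriv
  right
  push_neg at htriv
  obtain ⟨k0, a0, ha0⟩ := htriv
  intro k x y
  have main : ∀ m, m ≤ k → ∃ c ∈ K, ∀ i : Fin k, (i : ℕ) < m → c • x i = y i := by
    intro m
    induction m with
    | zero => exact fun _ => ⟨1, one_mem K, fun i hi => absurd hi (Nat.not_lt_zero _)⟩
    | succ m ih =>
      intro hm
      obtain ⟨c, hcK, hc⟩ := ih (Nat.le_of_succ_le hm)
      have hmk : m < k := hm
      set im : Fin k := ⟨m, hmk⟩ with him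
      by_cases hz : c • x im = y im
      · refine ⟨c, hcK, fun i hi => ?_⟩
        rcases Nat.lt_succ_iff_lt_or_eq.mp hi with h | h
        · exact hc i h
        · have : i = im := Fin.ext h
          rw [this]; exact hz
      · let e : Fin m ↪ X :=
          ⟨fun j => y ⟨j, lt_trans j.2 hmk⟩, by
            intro a b hab
            have h0 := y.injective hab
            have h5 : (a : ℕ) = b := by simpa using congrArg Fin.val h0
            exact Fin.ext h5⟩
        have hy' : ∀ j : Fin m, c • x im ≠ e j := by
          intro j h
          have h2 : c • x ⟨j, lt_trans j.2 hmk⟩ = y ⟨j, lt_trans j.2 hmk⟩ := hc _ j.2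
          have h3 : c • x im = c • x ⟨j, lt_trans j.2 hmk⟩ := by rw [h2]; exact h
          have h4 := x.injective (MulAction.injective c h3)
          have : (m : ℕ) = (j : ℕ) := congrArg Fin.val h4
          omega
        have hv' : ∀ j : Fin m, y im ≠ e j := by
          intro j h
          have h4 := y.injective h
          have : (m : ℕ) = (j : ℕ) := congrArg Fin.val h4
          omega
        obtain ⟨d, hdK, hfix, hmove⟩ :=
          keyL hG K k0 k0.2 a0 ha0 m e (c • x im) (y im) hy' hv' hz
        refine ⟨d * c, mul_mem hdK hcK, fun i hi => ?_⟩
        rw [mul_smul]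
        rcases Nat.lt_succ_iff_lt_or_eq.mp hi with h | h
        · rw [hc i h]
          have := hfix ⟨i, h⟩
          have he : e ⟨i, h⟩ = y i := congrArg y (Fin.ext rfl)
          rwa [he] at this
        · have : i = im := Fin.ext h
          rw [this]; exact hmove
  obtain ⟨c, hcK, hc⟩ := main k le_rfl
  exact ⟨⟨c, hcK⟩, fun i => hc i i.2⟩
end

section
/- If a countable group G acts highly transitively on a countable set X and H ≤ G has finite index, then the action of H on X is highly transitive. -/
section helpers
variable {G X : Type*} [Group G] [MulAction G X]

def snocEmb {k : ℕ} (w : Fin k ↪ X) (a : X) (ha : ∀ i, w i ≠ a) : Fin (k + 1) ↪ X :=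
  ⟨Fin.snoc w a, by
    intro i j h
    induction i using Fin.lastCases <;> induction j using Fin.lastCases <;>
      simp [Fin.snoc_castSucc, Fin.snoc_last] at h ⊢
    · exact absurd h.symm (ha _)
    · exact absurd h (ha _)
    · exact h⟩

@[simp] lemma snocEmb_castSucc {k : ℕ} (w : Fin k ↪ X) (a : X) (ha : ∀ i, w i ≠ a)
    (i : Fin k) : snocEmb w a ha i.castSucc = w i := by show Fin.snoc (α := fun _ => X) w a i.castSucc = w i; simp

@[simp] lemma snocEmb_last {k : ℕ} (w : Fin k ↪ X) (a : X) (ha : ∀ i, w i ≠ a) :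
    snocEmb w a ha (Fin.last k) = a := by show Fin.snoc (α := fun _ => X) w a (Fin.last k) = a; simp

/-- Key claim: a finite-index normal subgroup contains an element fixing a given finite
tuple pointwise and moving a prescribed fresh point to another prescribed fresh point. -/
lemma keyC [Infinite X] (hG : IsHighlyTransitive G X)
    (N : Subgroup G) [N.Normal] [N.FiniteIndex] {k : ℕ} (w : Fin k ↪ X) (p q : X)
    (hp : ∀ i, w i ≠ p) (hq : ∀ i, w i ≠ q) (hpq : p ≠ q) :
    ∃ m ∈ N, (∀ i, m • w i = w i) ∧ m • p = q := by
  -- Step 1: find m₀ ∈ N fixing w pointwise with m₀ • p ≠ p.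
  have hSfin : (Set.range w ∪ {p}).Finite := (Set.finite_range w).union (Set.finite_singleton p)
  have hSinf : ((Set.range w ∪ {p})ᶜ : Set X).Infinite := hSfin.infinite_compl
  haveI : Infinite ((Set.range w ∪ {p})ᶜ : Set X) := hSinf.to_subtype
  have hmem : ∀ v : ((Set.range w ∪ {p})ᶜ : Set X), (∀ i, w i ≠ (v : X)) ∧ (v : X) ≠ p := by
    intro v
    have := v.2
    simp only [Set.mem_compl_iff, Set.mem_union, Set.mem_range, Set.mem_singleton_iff,
      not_or, not_exists] at this
    exact ⟨this.1, this.2⟩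
  have hchoice : ∀ v : ((Set.range w ∪ {p})ᶜ : Set X),
      ∃ g : G, ∀ i, g • (snocEmb w p hp) i = (snocEmb w (v : X) (hmem v).1) i :=
    fun v => hG (k + 1) _ _
  choose gv hgv using hchoice
  have : ∃ v v' : ((Set.range w ∪ {p})ᶜ : Set X), v ≠ v' ∧
      (gv v : G ⧸ N) = (gv v' : G ⧸ N) :=
    Finite.exists_ne_map_eq_of_infinite _
  obtain ⟨v, v', hvv', hcoset⟩ := this
  have hmN : (gv v)⁻¹ * gv v' ∈ N := (QuotientGroup.eq).mp hcoset
  set m₀ : G := (gv v)⁻¹ * gv v' with hm₀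
  have hgw : ∀ (u : ((Set.range w ∪ {p})ᶜ : Set X)) (i : Fin k), gv u • w i = w i := by
    intro u i
    have := hgv u i.castSucc
    simpa using this
  have hgp : ∀ u : ((Set.range w ∪ {p})ᶜ : Set X), gv u • p = (u : X) := by
    intro u
    have := hgv u (Fin.last k)
    simpa using this
  have hm₀w : ∀ i, m₀ • w i = w i := by
    intro i
    rw [hm₀, mul_smul, hgw v', inv_smul_eq_iff, hgw v]
  have hm₀p : m₀ • p ≠ p := by
    rw [hm₀, mul_smul, hgp v', Ne, inv_smul_eq_iff, hgp v]
    intro h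
    exact hvv' (Subtype.ext h.symm)
  -- Step 2: conjugate m₀ to take p to q.
  set r : X := m₀ • p with hr
  have hrw : ∀ i, w i ≠ r := by
    intro i h
    apply hp i
    have : m₀ • w i = m₀ • p := by rw [hm₀w i, h, hr]
    exact MulAction.injective m₀ this
  have hrp : p ≠ r := fun h => hm₀p h.symm
  have hsrc : ∀ i, (snocEmb w p hp) i ≠ r := by
    intro i
    induction i using Fin.lastCases
    · simpa using hrp
    · simpa using hrw _
  have htgt : ∀ i, (snocEmb w p hp) i ≠ q := by
    intro i
    induction i using Fin.lastCases
    · simpa using hpq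
    · simpa using hq _
  obtain ⟨g, hg⟩ := hG (k + 2) (snocEmb (snocEmb w p hp) r hsrc) (snocEmb (snocEmb w p hp) q htgt)
  have h1 : ∀ i : Fin (k + 1), g • (snocEmb w p hp) i = (snocEmb w p hp) i := by
    intro i
    have := hg i.castSucc
    simpa using this
  have hgw2 : ∀ i, g • w i = w i := by
    intro i
    have := h1 i.castSucc
    simpa using this
  have hgp2 : g • p = p := by
    have := h1 (Fin.last k)
    simpa using this
  have hgr : g • r = q := by
    have := hg (Fin.last (k + 1))
    simp only [snocEmb_last] at this
    exact this
  refine ⟨g * m₀ * g⁻¹, Subgroup.Normal.conj_mem ‹N.Normal› m₀ hmN g, ?_, ?_⟩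
  · intro i
    rw [mul_smul, mul_smul, inv_smul_eq_iff.mpr (hgw2 i).symm, hm₀w i, hgw2 i]
  · rw [mul_smul, mul_smul, inv_smul_eq_iff.mpr hgp2.symm, ← hr, hgr]

lemma keyN [Infinite X] (hG : IsHighlyTransitive G X)
    (N : Subgroup G) [N.Normal] [N.FiniteIndex] :
    ∀ (k : ℕ) (x y : Fin k ↪ X), ∃ m ∈ N, ∀ i, m • x i = y i := by
  intro k
  induction k with
  | zero => exact fun x y => ⟨1, one_mem N, fun i => i.elim0⟩
  | succ k ih =>
    intro x y
    set x' : Fin k ↪ X := ⟨fun i => x i.castSucc,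
      fun i j h => Fin.castSucc_injective _ (x.injective h)⟩ with hx'
    set y' : Fin k ↪ X := ⟨fun i => y i.castSucc,
      fun i j h => Fin.castSucc_injective _ (y.injective h)⟩ with hy'
    obtain ⟨m, hmN, hm⟩ := ih x' y'
    have hm' : ∀ i : Fin k, m • x i.castSucc = y i.castSucc := hm
    by_cases hpq : m • x (Fin.last k) = y (Fin.last k)
    · refine ⟨m, hmN, fun i => ?_⟩
      induction i using Fin.lastCases
      · exact hpq
      · exact hm' _
    · have hp : ∀ i, y' i ≠ m • x (Fin.last k) := by
        intro i h
        have : m • x i.castSucc = m • x (Fin.last k) := by rw [hm' i]; exact h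
        have := x.injective (MulAction.injective m this)
        exact absurd this (Fin.castSucc_lt_last i).ne
      have hq : ∀ i, y' i ≠ y (Fin.last k) := by
        intro i h
        exact absurd (y.injective h) (Fin.castSucc_lt_last i).ne
      obtain ⟨m', hm'N, hfix, hmove⟩ :=
        keyC hG N y' (m • x (Fin.last k)) (y (Fin.last k)) hp hq hpq
      refine ⟨m' * m, mul_mem hm'N hmN, fun i => ?_⟩
      induction i using Fin.lastCases
      · rw [mul_smul, hmove]
      · rw [mul_smul, hm' _]
        exact hfix _
    
end helpers

theorem finite_index_subgroup_highly_transitive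
    {G X : Type*} [Group G] [MulAction G X] [Countable G] [Countable X] [Infinite X]
    (hG : IsHighlyTransitive G X) (H : Subgroup G) [H.FiniteIndex] :
    IsHighlyTransitive H X := by
  intro k x y
  obtain ⟨m, hmN, hm⟩ := keyN hG H.normalCore k x y
  exact ⟨⟨m, H.normalCore_le hmN⟩, fun i => hm i⟩
end

section
/- For any countable groups G and H, the free product G*H admits a faithful and highly transitive action on a countable set. -/
open Monoid

/-- A homomorphism to `Sym(X)` is highly transitive if for every `k` the induced action is
transitive on ordered `k`-tuples of pairwise distinct elements. -/
def IsHighlyTransitiveHom {K X : Type*} [Group K] (φ : K →* Equiv.Perm X) : Prop :=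
  ∀ (k : ℕ) (x y : Fin k ↪ X), ∃ w : K, ∀ i, φ w (x i) = y i

namespace HTAux

open Function List
set_option linter.unusedSectionVars false

section OneGroup

variable {C : Type*} [Group C]

abbrev PI (C : Type*) := List ((C × ℕ) × ℕ)

def Inv (p : PI C) : Prop := ∀ u ∈ p, ∀ v ∈ p, u.1 = v.1 ↔ u.2 = v.2

def ran (p : PI C) : List ℕ := p.map (·.2)

def rows (p : PI C) : List ℕ := p.map (·.1.2)

lemma mem_ran {p : PI C} {u} (hu : u ∈ p) : u.2 ∈ ran p :=
  List.mem_map_of_mem hu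

lemma ne_of_not_mem_ran {p : PI C} {x} (hx : x ∉ ran p) {u} (hu : u ∈ p) : u.2 ≠ x :=
  fun h => hx (h ▸ mem_ran hu)

lemma mem_rows {p : PI C} {u} (hu : u ∈ p) : u.1.2 ∈ rows p :=
  List.mem_map_of_mem hu

def bnd (l : List ℕ) : ℕ := l.foldr max 0

lemma le_bnd_of_mem : ∀ {l : List ℕ} {x : ℕ}, x ∈ l → x ≤ bnd l := by
  intro l
  induction l with
  | nil => simp
  | cons a t ih =>
    intro x hx
    rcases List.mem_cons.1 hx with rfl | hx
    · exact le_max_left _ _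
    · exact le_trans (ih hx) (le_max_right _ _)

lemma not_mem_of_bnd_lt {l : List ℕ} {x : ℕ} (h : bnd l < x) : x ∉ l :=
  fun hx => absurd (le_bnd_of_mem hx) (not_le.2 h)

lemma inv_nil : Inv ([] : PI C) := by
  intro u hu; simp at hu

lemma row_ne_of_lt {p : PI C} {R : ℕ} (h : bnd (rows p) < R) {u} (hu : u ∈ p) :
    u.1.2 ≠ R := fun hr => not_mem_of_bnd_lt h (hr ▸ mem_rows hu)

/-- Single extension: given a fixed nontrivial letter `s`, a fresh source `x` and a fresh
target `xe`, extend the partial injection so that the conjugated action of `s` maps `x` to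
`xe`. -/
lemma ext_one {p : PI C} (hp : Inv p) {s : C} (hs : s ≠ 1) {x xe : ℕ}
    (hx : x ∉ ran p) (hxe : xe ∉ ran p) (hne : xe ≠ x) :
    ∃ p' : PI C, Inv p' ∧ p ⊆ p' ∧
      ∃ z : C × ℕ, (z, x) ∈ p' ∧ ((s * z.1, z.2), xe) ∈ p' := by
  set R := bnd (rows p) + 1 with hR
  have hrow : ∀ u ∈ p, u.1.2 ≠ R := fun u hu => row_ne_of_lt (by omega) hu
  refine ⟨((1, R), x) :: ((s, R), xe) :: p, ?_, fun u hu => by simp [hu], (1, R), by simp, by simp⟩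
  intro u hu v hv
  have hvals : ∀ u ∈ p, u.2 ≠ x ∧ u.2 ≠ xe :=
    fun u hu => ⟨ne_of_not_mem_ran hx hu, ne_of_not_mem_ran hxe hu⟩
  rcases List.mem_cons.1 hu with rfl | hu
  · rcases List.mem_cons.1 hv with rfl | hv
    · simp
    rcases List.mem_cons.1 hv with rfl | hv
    · constructor
      · intro h; exact absurd (congrArg Prod.fst h).symm hs
      · intro h; exact absurd h.symm hne
    · constructor
      · intro h; exact absurd (congrArg Prod.snd h.symm) (hrow v hv)
      · intro h; exact absurd h.symm (hvals v hv).1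
  rcases List.mem_cons.1 hu with rfl | hu
  · rcases List.mem_cons.1 hv with rfl | hv
    · constructor
      · intro h; exact absurd (congrArg Prod.fst h) hs
      · intro h; exact absurd h hne
    rcases List.mem_cons.1 hv with rfl | hv
    · simp
    · constructor
      · intro h; exact absurd (congrArg Prod.snd h.symm) (hrow v hv)
      · intro h; exact absurd h.symm (hvals v hv).2
  · rcases List.mem_cons.1 hv with rfl | hv
    · constructor
      · intro h; exact absurd (congrArg Prod.snd h) (hrow u hu)
      · intro h; exact absurd h (hvals u hu).1
    rcases List.mem_cons.1 hv with rfl | hv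
    · constructor
      · intro h; exact absurd (congrArg Prod.snd h) (hrow u hu)
      · intro h; exact absurd h (hvals u hu).2
    · exact hp u hu v hv

/-- Extension making a given coordinate defined. -/
lemma ext_dom {p : PI C} (hp : Inv p) (z : C × ℕ) :
    ∃ p' : PI C, Inv p' ∧ p ⊆ p' ∧ ∃ x, (z, x) ∈ p' := by
  by_cases h : ∃ u ∈ p, u.1 = z
  · obtain ⟨u, hu, hz⟩ := h
    exact ⟨p, hp, fun _ h => h, u.2, by rwa [← hz, Prod.mk.eta]⟩
  · push_neg at h
    set v := bnd (ran p) + 1 with hv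
    have hval : ∀ u ∈ p, u.2 ≠ v := fun u hu => by
      have := le_bnd_of_mem (mem_ran hu); omega
    refine ⟨(z, v) :: p, ?_, fun u hu => by simp [hu], v, by simp⟩
    intro u hu w hw
    rcases List.mem_cons.1 hu with rfl | hu
    · rcases List.mem_cons.1 hw with rfl | hw
      · simp
      · constructor
        · intro h2; exact absurd h2.symm (h w hw)
        · intro h2; exact absurd h2.symm (hval w hw)
    · rcases List.mem_cons.1 hw with rfl | hw
      · constructor
        · intro h2; exact absurd h2 (h u hu)
        · intro h2; exact absurd h2 (hval u hu)
      · exact hp u hu w hw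

/-- Extension making a given value attained. -/
lemma ext_ran {p : PI C} (hp : Inv p) (v : ℕ) :
    ∃ p' : PI C, Inv p' ∧ p ⊆ p' ∧ ∃ z, (z, v) ∈ p' := by
  by_cases h : ∃ u ∈ p, u.2 = v
  · obtain ⟨u, hu, hz⟩ := h
    exact ⟨p, hp, fun _ h => h, u.1, by rwa [← hz, Prod.mk.eta]⟩
  · push_neg at h
    set R := bnd (rows p) + 1 with hR
    have hrow : ∀ u ∈ p, u.1.2 ≠ R := fun u hu => row_ne_of_lt (by omega) hu
    refine ⟨(((1 : C), R), v) :: p, ?_, fun u hu => by simp [hu], (1, R), by simp⟩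
    intro u hu w hw
    rcases List.mem_cons.1 hu with rfl | hu
    · rcases List.mem_cons.1 hw with rfl | hw
      · simp
      · constructor
        · intro h2; exact absurd (congrArg Prod.snd h2.symm) (hrow w hw)
        · intro h2; exact absurd h2.symm (h w hw)
    · rcases List.mem_cons.1 hw with rfl | hw
      · constructor
        · intro h2; exact absurd (congrArg Prod.snd h2) (hrow u hu)
        · intro h2; exact absurd h2 (h u hu)
      · exact hp u hu w hw


lemma exists_not_mem_list [Infinite C] (l : List C) : ∃ s : C, s ∉ l := by
  obtain ⟨s, hs⟩ := (Set.infinite_univ.diff l.finite_toSet).nonempty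
  exact ⟨s, fun h => hs.2 h⟩

/-- Multi-point extension with a generic letter: given fresh sources `a j` and arbitrary
targets `b j`, find a nontrivial `s` and an extension whose conjugated action maps each
`a j` to `b j`. -/
lemma ext_multi [Infinite C] {p : PI C} (hp : Inv p) {m : ℕ} {a b : Fin m → ℕ}
    (ha : Function.Injective a) (hb : Function.Injective b)
    (hafresh : ∀ j, a j ∉ ran p) (hab : ∀ j j', a j ≠ b j') :
    ∃ (s : C) (p' : PI C), s ≠ 1 ∧ Inv p' ∧ p ⊆ p' ∧
      ∀ j, ∃ z : C × ℕ, (z, a j) ∈ p' ∧ ((s * z.1, z.2), b j) ∈ p' := by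
  classical
  set R := bnd (rows p) + 1 with hR
  -- coordinates for the targets
  have hco : ∀ j : Fin m, ∃ c : C × ℕ, ((c, b j) ∈ p ∨
      (b j ∉ ran p ∧ c = (1, R + j))) := by
    intro j
    by_cases h : ∃ u ∈ p, u.2 = b j
    · obtain ⟨u, hu, hub⟩ := h
      exact ⟨u.1, Or.inl (by rwa [← hub, Prod.mk.eta])⟩
    · refine ⟨(1, R + j), Or.inr ⟨?_, rfl⟩⟩
      intro hc
      obtain ⟨u, hu, hub⟩ := List.mem_map.1 hc
      exact h ⟨u, hu, hub⟩
  choose co hco using hco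
  set q : PI C := p ++ (List.finRange m).map fun j => (co j, b j) with hq
  have hmemq : ∀ u ∈ q, u ∈ p ∨ ∃ j : Fin m, b j ∉ ran p ∧ u = ((1, R + (j : ℕ)), b j) := by
    intro u hu
    rcases List.mem_append.1 hu with hu | hu
    · exact Or.inl hu
    · obtain ⟨j, _, rfl⟩ := List.mem_map.1 hu
      rcases hco j with h | ⟨h1, h2⟩
      · exact Or.inl h
      · exact Or.inr ⟨j, h1, by rw [h2]⟩
  have hrowq : ∀ u ∈ p, ∀ j : Fin m, u.1 ≠ ((1 : C), R + (j : ℕ)) := by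
    intro u hu j h
    exact row_ne_of_lt (p := p) (R := R + j) (by omega) hu (congrArg Prod.snd h)
  have hinvq : Inv q := by
    intro u hu v hv
    rcases hmemq u hu with hu' | ⟨j, hbj, rfl⟩
    · rcases hmemq v hv with hv' | ⟨j', hbj', rfl⟩
      · exact hp u hu' v hv'
      · constructor
        · intro h; exact absurd h (hrowq u hu' j')
        · intro h; exact absurd h (ne_of_not_mem_ran hbj' hu')
    · rcases hmemq v hv with hv' | ⟨j', hbj', rfl⟩
      · constructor
        · intro h; exact absurd h.symm (hrowq v hv' j)
        · intro h; exact absurd h.symm (ne_of_not_mem_ran hbj hv')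
      · constructor
        · intro h
          simp only [Prod.mk.injEq] at h
          have : j = j' := Fin.ext (by omega)
          rw [this]
        · intro h
          simp only at h
          rw [hb h]
  have hbq : ∀ j, (co j, b j) ∈ q := by
    intro j
    exact List.mem_append.2 (Or.inr (List.mem_map_of_mem (List.mem_finRange j)))
  -- choose a generic letter s
  set bads : List C := 1 :: (List.finRange m).flatMap (fun j => q.map fun u => (co j).1 * u.1.1⁻¹)
    with hbads
  obtain ⟨s, hsbad⟩ := exists_not_mem_list bads
  have hs1 : s ≠ 1 := fun h => hsbad (h ▸ List.mem_cons_self)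
  have hsfresh : ∀ j : Fin m, ∀ u ∈ q, u.1 ≠ (s⁻¹ * (co j).1, (co j).2) := by
    intro j u hu h
    apply hsbad
    have : s = (co j).1 * u.1.1⁻¹ := by
      have h1 : u.1.1 = s⁻¹ * (co j).1 := congrArg Prod.fst h
      rw [h1]; group
    rw [hbads]
    refine List.mem_cons.2 (Or.inr ?_)
    rw [this]
    exact List.mem_flatMap.2 ⟨j, List.mem_finRange j, List.mem_map_of_mem hu⟩
  set p' : PI C := q ++ (List.finRange m).map
      (fun j => ((s⁻¹ * (co j).1, (co j).2), a j)) with hp'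
  have hmemp' : ∀ u ∈ p', u ∈ q ∨ ∃ j : Fin m, u = ((s⁻¹ * (co j).1, (co j).2), a j) := by
    intro u hu
    rcases List.mem_append.1 hu with hu | hu
    · exact Or.inl hu
    · obtain ⟨j, _, rfl⟩ := List.mem_map.1 hu
      exact Or.inr ⟨j, rfl⟩
  have hafreshq : ∀ j, ∀ u ∈ q, u.2 ≠ a j := by
    intro j u hu
    rcases hmemq u hu with hu' | ⟨j', _, rfl⟩
    · exact ne_of_not_mem_ran (hafresh j) hu'
    · exact fun h => hab j j' (h.symm)
  have hcoinj : Function.Injective co := by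
    intro j j' h
    exact hb ((hinvq _ (hbq j) _ (hbq j')).1 h)
  have hinvp' : Inv p' := by
    intro u hu v hv
    rcases hmemp' u hu with hu' | ⟨j, rfl⟩
    · rcases hmemp' v hv with hv' | ⟨j', rfl⟩
      · exact hinvq u hu' v hv'
      · constructor
        · intro h; exact absurd h (hsfresh j' u hu')
        · intro h; exact absurd h (hafreshq j' u hu')
    · rcases hmemp' v hv with hv' | ⟨j', rfl⟩
      · constructor
        · intro h; exact absurd h.symm (hsfresh j v hv')
        · intro h; exact absurd h.symm (hafreshq j v hv')
      · constructor
        · intro h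
          simp only [Prod.mk.injEq] at h
          have : co j = co j' := by
            have h1 : s⁻¹ * (co j).1 = s⁻¹ * (co j').1 := h.1
            have h2 := mul_left_cancel h1
            exact Prod.ext h2 h.2
          rw [hcoinj this]
        · intro h
          simp only at h
          rw [ha h]
  refine ⟨s, p', hs1, hinvp', ?_, ?_⟩
  · intro u hu
    exact List.mem_append.2 (Or.inl (List.mem_append.2 (Or.inl hu)))
  · intro j
    refine ⟨(s⁻¹ * (co j).1, (co j).2), ?_, ?_⟩
    · refine List.mem_append.2 (Or.inr ?_)
      exact List.mem_map_of_mem (List.mem_finRange j)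
    · have : s * (s⁻¹ * (co j).1) = (co j).1 := by group
      rw [this]
      exact List.mem_append.2 (Or.inl (hbq j))


/-- The free action of `C` on `C × ℕ` as an equivalence. -/
def actE (s : C) : (C × ℕ) ≃ (C × ℕ) := (Equiv.mulLeft s).prodCongr (Equiv.refl ℕ)

lemma actE_apply (s : C) (z : C × ℕ) : actE s z = (s * z.1, z.2) := rfl

/-- Conjugating the free action by a bijection `(C × ℕ) ≃ ℕ` yields an action on `ℕ`. -/
noncomputable def conjHom (π : (C × ℕ) ≃ ℕ) : C →* Equiv.Perm ℕ where
  toFun s := (π.symm.trans (actE s)).trans π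
  map_one' := by
    ext x
    simp [actE_apply]
  map_mul' s t := by
    ext x
    simp [actE_apply, mul_assoc]

lemma conjHom_apply (π : (C × ℕ) ≃ ℕ) (s : C) (x : ℕ) :
    conjHom π s x = π (s * (π.symm x).1, (π.symm x).2) := rfl

/-- Evaluation of `conjHom` through pins. -/
lemma conjHom_eval (π : (C × ℕ) ≃ ℕ) {p : PI C} (hcompat : ∀ e ∈ p, π e.1 = e.2)
    {z : C × ℕ} {s : C} {x b : ℕ} (h1 : (z, x) ∈ p) (h2 : ((s * z.1, z.2), b) ∈ p) :
    conjHom π s x = b := by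
  have hzx : π z = x := hcompat _ h1
  have hsymm : π.symm x = z := by rw [← hzx, Equiv.symm_apply_apply]
  rw [conjHom_apply, hsymm]
  exact hcompat _ h2

end OneGroup

/-- Build an equivalence from a total, surjective, functional, injective relation. -/
noncomputable def toEquiv {α β : Type*} (R : α → β → Prop)
    (tot : ∀ a, ∃ b, R a b) (surj : ∀ b, ∃ a, R a b)
    (funl : ∀ {a b b'}, R a b → R a b' → b = b')
    (injl : ∀ {a a' b}, R a b → R a' b → a = a') : α ≃ β where
  toFun a := (tot a).choose
  invFun b := (surj b).choose
  left_inv a := injl (surj _).choose_spec (tot a).choose_spec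
  right_inv b := funl (tot _).choose_spec (surj b).choose_spec

lemma toEquiv_eq {α β : Type*} (R : α → β → Prop) (tot) (surj)
    (funl : ∀ {a b b'}, R a b → R a b' → b = b')
    (injl : ∀ {a a' b}, R a b → R a' b → a = a') {a b} (h : R a b) :
    toEquiv R tot surj @funl @injl a = b :=
  funl (tot a).choose_spec h


section NF
variable {G H : Type*} [Group G] [Group H]

/-- A list of letters is alternating and nontrivial. -/
def Alt (l : List (G ⊕ H)) : Prop :=
  l.Chain' (fun u v => u.isLeft ≠ v.isLeft) ∧
    ∀ u ∈ l, Sum.elim (fun g : G => g ≠ 1) (fun h : H => h ≠ 1) u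

/-- The product of a list of letters in the coproduct. -/
def wprod (l : List (G ⊕ H)) : Coprod G H :=
  (l.map (Sum.elim Coprod.inl Coprod.inr)).prod

lemma wprod_nil : wprod ([] : List (G ⊕ H)) = 1 := rfl

lemma wprod_cons (u : G ⊕ H) (l : List (G ⊕ H)) :
    wprod (u :: l) = Sum.elim Coprod.inl Coprod.inr u * wprod l := by
  simp [wprod]

/-- Every element of the coproduct has an alternating representation. -/
lemma exists_alt (w : Coprod G H) : ∃ l : List (G ⊕ H), Alt l ∧ wprod l = w := by
  induction w using Coprod.induction_on' with
  | one => exact ⟨[], ⟨List.isChain_nil, by simp⟩, rfl⟩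
  | inl_mul g x ih =>
    obtain ⟨l, ⟨hchain, hne⟩, rfl⟩ := ih
    by_cases hg : g = 1
    · exact ⟨l, ⟨hchain, hne⟩, by simp [hg]⟩
    match l with
    | [] =>
      exact ⟨[Sum.inl g], ⟨List.isChain_singleton _, by simpa using hg⟩,
        by simp [wprod_cons, wprod_nil]⟩
    | Sum.inl g' :: t =>
      by_cases hgg : g * g' = 1
      · refine ⟨t, ⟨hchain.tail, fun u hu => hne u (List.mem_cons_of_mem _ hu)⟩, ?_⟩
        rw [wprod_cons]
        simp only [Sum.elim_inl]
        rw [← mul_assoc, ← map_mul, hgg, map_one, one_mul]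
      · refine ⟨Sum.inl (g * g') :: t, ⟨?_, ?_⟩, ?_⟩
        · rcases t with _ | ⟨v, t'⟩
          · exact List.isChain_singleton _
          · refine List.isChain_cons_cons.2 ?_
            exact ⟨(List.isChain_cons_cons.1 hchain).1, (List.isChain_cons_cons.1 hchain).2⟩
        · intro u hu
          rcases List.mem_cons.1 hu with rfl | hu
          · simpa using hgg
          · exact hne u (List.mem_cons_of_mem _ hu)
        · rw [wprod_cons, wprod_cons]
          simp only [Sum.elim_inl]
          rw [← mul_assoc, ← map_mul]
    | Sum.inr h' :: t =>
      refine ⟨Sum.inl g :: Sum.inr h' :: t, ⟨?_, ?_⟩, ?_⟩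
      · refine List.isChain_cons_cons.2 ?_
        exact ⟨by simp, hchain⟩
      · intro u hu
        rcases List.mem_cons.1 hu with rfl | hu
        · simpa using hg
        · exact hne u hu
      · rw [wprod_cons]
        simp
  | inr_mul h x ih =>
    obtain ⟨l, ⟨hchain, hne⟩, rfl⟩ := ih
    by_cases hh : h = 1
    · exact ⟨l, ⟨hchain, hne⟩, by simp [hh]⟩
    match l with
    | [] =>
      exact ⟨[Sum.inr h], ⟨List.isChain_singleton _, by simpa using hh⟩,
        by simp [wprod_cons, wprod_nil]⟩
    | Sum.inr h' :: t =>
      by_cases hhh : h * h' = 1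
      · refine ⟨t, ⟨hchain.tail, fun u hu => hne u (List.mem_cons_of_mem _ hu)⟩, ?_⟩
        rw [wprod_cons]
        simp only [Sum.elim_inr]
        rw [← mul_assoc, ← map_mul, hhh, map_one, one_mul]
      · refine ⟨Sum.inr (h * h') :: t, ⟨?_, ?_⟩, ?_⟩
        · rcases t with _ | ⟨v, t'⟩
          · exact List.isChain_singleton _
          · refine List.isChain_cons_cons.2 ?_
            exact ⟨(List.isChain_cons_cons.1 hchain).1, (List.isChain_cons_cons.1 hchain).2⟩
        · intro u hu
          rcases List.mem_cons.1 hu with rfl | hu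
          · simpa using hhh
          · exact hne u (List.mem_cons_of_mem _ hu)
        · rw [wprod_cons, wprod_cons]
          simp only [Sum.elim_inr]
          rw [← mul_assoc, ← map_mul]
    | Sum.inl g' :: t =>
      refine ⟨Sum.inr h :: Sum.inl g' :: t, ⟨?_, ?_⟩, ?_⟩
      · refine List.isChain_cons_cons.2 ?_
        exact ⟨by simp, hchain⟩
      · intro u hu
        rcases List.mem_cons.1 hu with rfl | hu
        · simpa using hh
        · exact hne u hu
      · rw [wprod_cons]
        simp

end NF

/- ===================== MAIN SECTION ===================== -/

section Main
variable {G H : Type*} [Group G] [Group H] [Countable G] [Countable H]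
  [Infinite G] [Infinite H]

abbrev State (G H : Type*) := PI G × PI H

def SInv (S : State G H) : Prop := Inv S.1 ∧ Inv S.2

def SLe (S S' : State G H) : Prop := S.1 ⊆ S'.1 ∧ S.2 ⊆ S'.2

lemma SLe.rfl {S : State G H} : SLe S S := ⟨fun _ h => h, fun _ h => h⟩

lemma SLe.trans {S S' S'' : State G H} (h : SLe S S') (h' : SLe S' S'') : SLe S S'' :=
  ⟨fun _ hu => h'.1 (h.1 hu), fun _ hu => h'.2 (h.2 hu)⟩

def Compat (πG : (G × ℕ) ≃ ℕ) (πH : (H × ℕ) ≃ ℕ) (S : State G H) : Prop :=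
  (∀ e ∈ S.1, πG e.1 = e.2) ∧ (∀ e ∈ S.2, πH e.1 = e.2)

lemma Compat.mono {πG : (G × ℕ) ≃ ℕ} {πH : (H × ℕ) ≃ ℕ} {S S' : State G H}
    (h : Compat πG πH S') (hle : SLe S S') : Compat πG πH S :=
  ⟨fun e he => h.1 e (hle.1 he), fun e he => h.2 e (hle.2 he)⟩

noncomputable def Phi (πG : (G × ℕ) ≃ ℕ) (πH : (H × ℕ) ≃ ℕ) : Coprod G H →* Equiv.Perm ℕ :=
  Coprod.lift (conjHom πG) (conjHom πH)

/-- Trajectory lemma: evaluate an alternating word on a fresh point, forcing the result to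
be a prescribed fresh value. -/
lemma traj (l : List (G ⊕ H)) (hchain : l.Chain' (fun u v => u.isLeft ≠ v.isLeft))
    (hne : ∀ u ∈ l, Sum.elim (fun g : G => g ≠ 1) (fun h : H => h ≠ 1) u)
    (S : State G H) (hS : SInv S) (x₀ : ℕ) (hx1 : x₀ ∉ ran S.1) (hx2 : x₀ ∉ ran S.2)
    (T : List ℕ) :
    ∃ (S' : State G H) (xe : ℕ), SInv S' ∧ SLe S S' ∧
      (l ≠ [] → xe ∉ T) ∧
      ((∀ u ∈ l.head?, u.isLeft = true) → xe ∉ ran S'.2) ∧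
      ((∀ u ∈ l.head?, u.isLeft = false) → xe ∉ ran S'.1) ∧
      (l = [] → S' = S ∧ xe = x₀) ∧
      ∀ πG πH, Compat πG πH S' → Phi πG πH (wprod l) x₀ = xe := by
  induction l with
  | nil =>
    refine ⟨S, x₀, hS, SLe.rfl, by simp, fun _ => hx2, fun _ => hx1, fun _ => ⟨rfl, rfl⟩, ?_⟩
    intro πG πH _
    simp [wprod]
  | cons u rest ih =>
    obtain ⟨S₁, xm, hS₁, hle₁, _, hf2, hf1, hnil, heval⟩ :=
      ih hchain.tail (fun v hv => hne v (List.mem_cons_of_mem _ hv))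
    set B := ran S₁.1 ++ ran S₁.2 ++ T ++ [xm] with hB
    set xe := bnd B + 1 with hxe
    have hfresh : ∀ y ∈ B, y ≠ xe := by
      intro y hy
      have := le_bnd_of_mem hy
      omega
    have hxe1 : xe ∉ ran S₁.1 := fun h => hfresh xe (by simp [hB, h]) rfl
    have hxe2 : xe ∉ ran S₁.2 := fun h => hfresh xe (by simp [hB, h]) rfl
    have hxeT : xe ∉ T := fun h => hfresh xe (by simp [hB, h]) rfl
    have hxem : xe ≠ xm := fun h => hfresh xm (by simp [hB]) h.symm
    cases u with
    | inl g =>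
      have hg : g ≠ 1 := by simpa using hne (Sum.inl g) (List.mem_cons_self)
      have hxm1 : xm ∉ ran S₁.1 := by
        match rest, hnil, hf1 with
        | [], hnil, _ =>
          obtain ⟨rfl, rfl⟩ := hnil rfl
          exact hx1
        | (v :: t), _, hf1 =>
          apply hf1
          intro u' hu'
          simp only [List.head?_cons, Option.mem_def, Option.some.injEq] at hu'
          subst hu'
          have h2 := (List.isChain_cons_cons.1 hchain).1
          simp only [Sum.isLeft_inl] at h2
          simpa using (Ne.symm h2)
      obtain ⟨p', hinv', hsub', z, hz1, hz2⟩ := ext_one hS₁.1 hg hxm1 hxe1 hxem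
      have hle₂ : SLe S₁ (p', S₁.2) := ⟨hsub', fun _ h => h⟩
      refine ⟨(p', S₁.2), xe, ⟨hinv', hS₁.2⟩, SLe.trans hle₁ hle₂,
        fun _ => hxeT, fun _ => hxe2, ?_, by simp, ?_⟩
      · intro hcon
        exact absurd (hcon (Sum.inl g) rfl) (by simp)
      · intro πG πH hcompat
        have hcompat₁ : Compat πG πH S₁ := hcompat.mono hle₂
        rw [wprod_cons, map_mul]
        simp only [Sum.elim_inl]
        rw [Equiv.Perm.mul_apply, heval πG πH hcompat₁]
        have hl : Phi πG πH (Coprod.inl g) = conjHom πG g := Coprod.lift_apply_inl _ _ _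
        rw [hl]
        exact conjHom_eval πG hcompat.1 hz1 hz2
    | inr h =>
      have hg : h ≠ 1 := by simpa using hne (Sum.inr h) (List.mem_cons_self)
      have hxm2 : xm ∉ ran S₁.2 := by
        match rest, hnil, hf2 with
        | [], hnil, _ =>
          obtain ⟨rfl, rfl⟩ := hnil rfl
          exact hx2
        | (v :: t), _, hf2 =>
          apply hf2
          intro u' hu'
          simp only [List.head?_cons, Option.mem_def, Option.some.injEq] at hu'
          subst hu'
          have h2 := (List.isChain_cons_cons.1 hchain).1
          simp only [Sum.isLeft_inr] at h2
          simpa using (Ne.symm h2)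
      obtain ⟨p', hinv', hsub', z, hz1, hz2⟩ := ext_one hS₁.2 hg hxm2 hxe2 hxem
      have hle₂ : SLe S₁ (S₁.1, p') := ⟨fun _ h => h, hsub'⟩
      refine ⟨(S₁.1, p'), xe, ⟨hS₁.1, hinv'⟩, SLe.trans hle₁ hle₂,
        fun _ => hxeT, ?_, fun _ => hxe1, by simp, ?_⟩
      · intro hcon
        exact absurd (hcon (Sum.inr h) rfl) (by simp)
      · intro πG πH hcompat
        have hcompat₁ : Compat πG πH S₁ := hcompat.mono hle₂
        rw [wprod_cons, map_mul]
        simp only [Sum.elim_inr]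
        rw [Equiv.Perm.mul_apply, heval πG πH hcompat₁]
        have hl : Phi πG πH (Coprod.inr h) = conjHom πH h := Coprod.lift_apply_inr _ _ _
        rw [hl]
        exact conjHom_eval πH hcompat.2 hz1 hz2

/-- Requirements to be handled along the construction. -/
abbrev Req (G H : Type*) [Group G] [Group H] :=
  ((G × ℕ) ⊕ (H × ℕ)) ⊕ ((ℕ ⊕ ℕ) ⊕ ((Coprod G H) ⊕ (Σ k : ℕ, (Fin k ↪ ℕ) × (Fin k ↪ ℕ))))

instance : Countable (Coprod G H) := by
  have : Countable (FreeMonoid (G ⊕ H)) := Countable.of_equiv _ FreeMonoid.toList.symm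
  exact Coprod.mk_surjective.countable

instance (k : ℕ) : Countable (Fin k ↪ ℕ) := DFunLike.coe_injective.countable

/-- What it means for a state to satisfy a requirement. -/
def Sat : Req G H → State G H → Prop
  | .inl (.inl z), S => ∃ x, (z, x) ∈ S.1
  | .inl (.inr z), S => ∃ x, (z, x) ∈ S.2
  | .inr (.inl (.inl v)), S => ∃ z, (z, v) ∈ S.1
  | .inr (.inl (.inr v)), S => ∃ z, (z, v) ∈ S.2
  | .inr (.inr (.inl w)), S => w = 1 ∨ ∃ x₀ x₁ : ℕ, x₀ ≠ x₁ ∧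
      ∀ πG πH, Compat πG πH S → Phi πG πH w x₀ = x₁
  | .inr (.inr (.inr ⟨_, x, y⟩)), S => ∃ u : Coprod G H,
      ∀ πG πH, Compat πG πH S → ∀ j, Phi πG πH u (x j) = y j

/-- Any requirement can be satisfied by a finite extension. -/
lemma step (S : State G H) (hS : SInv S) (r : Req G H) :
    ∃ S' : State G H, SInv S' ∧ SLe S S' ∧ Sat r S' := by
  match r with
  | .inl (.inl z) =>
    obtain ⟨p', hinv', hsub', x, hx⟩ := ext_dom hS.1 z
    exact ⟨(p', S.2), ⟨hinv', hS.2⟩, ⟨hsub', fun _ h => h⟩, x, hx⟩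
  | .inl (.inr z) =>
    obtain ⟨p', hinv', hsub', x, hx⟩ := ext_dom hS.2 z
    exact ⟨(S.1, p'), ⟨hS.1, hinv'⟩, ⟨fun _ h => h, hsub'⟩, x, hx⟩
  | .inr (.inl (.inl v)) =>
    obtain ⟨p', hinv', hsub', z, hz⟩ := ext_ran hS.1 v
    exact ⟨(p', S.2), ⟨hinv', hS.2⟩, ⟨hsub', fun _ h => h⟩, z, hz⟩
  | .inr (.inl (.inr v)) =>
    obtain ⟨p', hinv', hsub', z, hz⟩ := ext_ran hS.2 v
    exact ⟨(S.1, p'), ⟨hS.1, hinv'⟩, ⟨fun _ h => h, hsub'⟩, z, hz⟩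
  | .inr (.inr (.inl w)) =>
    obtain ⟨l, ⟨hchain, hne⟩, hprod⟩ := exists_alt w
    rcases eq_or_ne l [] with rfl | hlne
    · exact ⟨S, hS, SLe.rfl, Or.inl (by simp [← hprod, wprod])⟩
    · set x₀ := bnd (ran S.1 ++ ran S.2) + 1 with hx₀
      have hx1 : x₀ ∉ ran S.1 := by
        intro h
        have := le_bnd_of_mem (l := ran S.1 ++ ran S.2) (List.mem_append.2 (Or.inl h))
        omega
      have hx2 : x₀ ∉ ran S.2 := by
        intro h
        have := le_bnd_of_mem (l := ran S.1 ++ ran S.2) (List.mem_append.2 (Or.inr h))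
        omega
      obtain ⟨S', xe, hS', hle, hT, _, _, _, heval⟩ :=
        traj l hchain hne S hS x₀ hx1 hx2 [x₀]
      refine ⟨S', hS', hle, Or.inr ⟨x₀, xe, ?_, ?_⟩⟩
      · intro hcon
        exact (hT hlne) (by simp [hcon])
      · intro πG πH hc
        rw [← hprod]
        exact heval πG πH hc
  | .inr (.inr (.inr ⟨k, x, y⟩)) =>
    set B := ran S.1 ++ ran S.2 ++ List.ofFn (x ·) ++ List.ofFn (y ·) with hBdef
    set M := bnd B + 1 with hM
    have hBfresh : ∀ w ∈ B, ∀ j : Fin k, w ≠ M + (j : ℕ) := by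
      intro w hw j
      have := le_bnd_of_mem hw
      omega
    set c : Fin k → ℕ := fun j => M + (j : ℕ) with hc
    have hcinj : Function.Injective c := by
      intro i j hij
      simp only [hc] at hij
      exact Fin.ext (by omega)
    have hcfresh1 : ∀ j, c j ∉ ran S.1 := fun j h =>
      hBfresh _ (List.mem_append.2 (Or.inl (List.mem_append.2 (Or.inl (List.mem_append.2 (Or.inl h)))))) j rfl
    have hcfresh2 : ∀ j, c j ∉ ran S.2 := fun j h =>
      hBfresh _ (List.mem_append.2 (Or.inl (List.mem_append.2 (Or.inl (List.mem_append.2 (Or.inr h)))))) j rfl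
    have hxB : ∀ j', x j' ∈ B := fun j' =>
      List.mem_append.2 (Or.inl (List.mem_append.2 (Or.inr
        (List.mem_ofFn.2 ⟨j', rfl⟩))))
    have hyB : ∀ j', y j' ∈ B := fun j' =>
      List.mem_append.2 (Or.inr (List.mem_ofFn.2 ⟨j', rfl⟩))
    have hcx : ∀ j j', c j ≠ x j' := fun j j' h => hBfresh (x j') (hxB j') j h.symm
    have hcy : ∀ j j', c j ≠ y j' := fun j j' h => hBfresh (y j') (hyB j') j h.symm
    obtain ⟨sH, pH', hsH1, hinvH, hsubH, hpinsH⟩ :=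
      ext_multi (p := S.2) hS.2 (a := c) (b := fun j => x j) hcinj x.injective hcfresh2 hcx
    obtain ⟨sG, pG', hsG1, hinvG, hsubG, hpinsG⟩ :=
      ext_multi (p := S.1) hS.1 (a := c) (b := fun j => y j) hcinj y.injective hcfresh1 hcy
    refine ⟨(pG', pH'), ⟨hinvG, hinvH⟩, ⟨hsubG, hsubH⟩,
      Coprod.inl sG * Coprod.inr sH⁻¹, ?_⟩
    intro πG πH hcompat j
    obtain ⟨zH, hzH1, hzH2⟩ := hpinsH j
    obtain ⟨zG, hzG1, hzG2⟩ := hpinsG j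
    have h1 : conjHom πH sH (c j) = x j := conjHom_eval πH hcompat.2 hzH1 hzH2
    have h1' : conjHom πH sH⁻¹ (x j) = c j := by
      rw [map_inv, ← h1]
      exact Equiv.symm_apply_apply _ _
    have h2 : conjHom πG sG (c j) = y j := conjHom_eval πG hcompat.1 hzG1 hzG2
    rw [map_mul, Equiv.Perm.mul_apply]
    have hl : Phi πG πH (Coprod.inr sH⁻¹) = conjHom πH sH⁻¹ := Coprod.lift_apply_inr _ _ _
    have hl2 : Phi πG πH (Coprod.inl sG) = conjHom πG sG := Coprod.lift_apply_inl _ _ _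
    rw [hl, hl2, h1', h2]

section Limit

variable (e : ℕ → Req G H)

/-- The increasing chain of states, handling requirement `e n` at stage `n+1`. -/
noncomputable def chain : ℕ → {S : State G H // SInv S} :=
  fun n => Nat.rec (motive := fun _ => {S : State G H // SInv S})
    ⟨(([] : PI G), ([] : PI H)), inv_nil, inv_nil⟩
    (fun n ih => ⟨(step ih.1 ih.2 (e n)).choose,
      (step ih.1 ih.2 (e n)).choose_spec.1⟩) n

lemma chain_succ_le (n : ℕ) : SLe (chain e n).1 (chain e (n + 1)).1 :=
  (step (chain e n).1 (chain e n).2 (e n)).choose_spec.2.1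

lemma chain_succ_sat (n : ℕ) : Sat (e n) (chain e (n + 1)).1 :=
  (step (chain e n).1 (chain e n).2 (e n)).choose_spec.2.2

lemma chain_le {m n : ℕ} (h : m ≤ n) : SLe (chain e m).1 (chain e n).1 := by
  induction n, h using Nat.le_induction with
  | base => exact SLe.rfl
  | succ n _ ih => exact ih.trans (chain_succ_le e n)

def RelG : (G × ℕ) → ℕ → Prop := fun z x => ∃ n, (z, x) ∈ ((chain e n).1).1

def RelH : (H × ℕ) → ℕ → Prop := fun z x => ∃ n, (z, x) ∈ ((chain e n).1).2

variable (he : Function.Surjective e)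
include he

lemma totG : ∀ z, ∃ x, RelG e z x := by
  intro z
  obtain ⟨n, hn⟩ := he (.inl (.inl z))
  have := chain_succ_sat e n
  rw [hn] at this
  obtain ⟨x, hx⟩ := this
  exact ⟨x, n + 1, hx⟩

lemma surjG : ∀ x, ∃ z, RelG e z x := by
  intro x
  obtain ⟨n, hn⟩ := he (.inr (.inl (.inl x)))
  have := chain_succ_sat e n
  rw [hn] at this
  obtain ⟨z, hz⟩ := this
  exact ⟨z, n + 1, hz⟩

lemma totH : ∀ z, ∃ x, RelH e z x := by
  intro z
  obtain ⟨n, hn⟩ := he (.inl (.inr z))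
  have := chain_succ_sat e n
  rw [hn] at this
  obtain ⟨x, hx⟩ := this
  exact ⟨x, n + 1, hx⟩

lemma surjH : ∀ x, ∃ z, RelH e z x := by
  intro x
  obtain ⟨n, hn⟩ := he (.inr (.inl (.inr x)))
  have := chain_succ_sat e n
  rw [hn] at this
  obtain ⟨z, hz⟩ := this
  exact ⟨z, n + 1, hz⟩

omit he

lemma funlG : ∀ {z x x'}, RelG e z x → RelG e z x' → x = x' := by
  rintro z x x' ⟨n, hn⟩ ⟨n', hn'⟩
  have h1 := (chain_le e (Nat.le_max_left n n')).1 hn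
  have h2 := (chain_le e (Nat.le_max_right n n')).1 hn'
  exact ((chain e (max n n')).2.1 _ h1 _ h2).1 rfl

lemma injlG : ∀ {z z' x}, RelG e z x → RelG e z' x → z = z' := by
  rintro z z' x ⟨n, hn⟩ ⟨n', hn'⟩
  have h1 := (chain_le e (Nat.le_max_left n n')).1 hn
  have h2 := (chain_le e (Nat.le_max_right n n')).1 hn'
  exact ((chain e (max n n')).2.1 _ h1 _ h2).2 rfl

lemma funlH : ∀ {z x x'}, RelH e z x → RelH e z x' → x = x' := by
  rintro z x x' ⟨n, hn⟩ ⟨n', hn'⟩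
  have h1 := (chain_le e (Nat.le_max_left n n')).2 hn
  have h2 := (chain_le e (Nat.le_max_right n n')).2 hn'
  exact ((chain e (max n n')).2.2 _ h1 _ h2).1 rfl

lemma injlH : ∀ {z z' x}, RelH e z x → RelH e z' x → z = z' := by
  rintro z z' x ⟨n, hn⟩ ⟨n', hn'⟩
  have h1 := (chain_le e (Nat.le_max_left n n')).2 hn
  have h2 := (chain_le e (Nat.le_max_right n n')).2 hn'
  exact ((chain e (max n n')).2.2 _ h1 _ h2).2 rfl

end Limit

/-- The main construction. -/
lemma main_construction : ∃ φ : Coprod G H →* Equiv.Perm ℕ, Function.Injective φ ∧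
    ∀ (k : ℕ) (x y : Fin k ↪ ℕ), ∃ w : Coprod G H, ∀ i, φ w (x i) = y i := by
  have : Nonempty (Req G H) := ⟨.inr (.inl (.inl 0))⟩
  obtain ⟨e, he⟩ := exists_surjective_nat (Req G H)
  set πG : (G × ℕ) ≃ ℕ :=
    toEquiv (RelG e) (totG e he) (surjG e he) (funlG e) (injlG e) with hπG
  set πH : (H × ℕ) ≃ ℕ :=
    toEquiv (RelH e) (totH e he) (surjH e he) (funlH e) (injlH e) with hπH
  have hcompat : ∀ n, Compat πG πH (chain e n).1 := by
    intro n
    constructor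
    · intro u hu
      exact toEquiv_eq (RelG e) _ _ (funlG e) (injlG e) ⟨n, by rwa [Prod.mk.eta]⟩
    · intro u hu
      exact toEquiv_eq (RelH e) _ _ (funlH e) (injlH e) ⟨n, by rwa [Prod.mk.eta]⟩
  refine ⟨Phi πG πH, ?_, ?_⟩
  · rw [injective_iff_map_eq_one]
    intro w hw
    by_contra hwne
    obtain ⟨n, hn⟩ := he (.inr (.inr (.inl w)))
    have hsat := chain_succ_sat e n
    rw [hn] at hsat
    rcases hsat with rfl | ⟨x₀, x₁, hne01, heval⟩
    · exact hwne rfl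
    · have := heval πG πH (hcompat (n + 1))
      rw [hw] at this
      simp at this
      exact hne01 this
  · intro k x y
    obtain ⟨n, hn⟩ := he (.inr (.inr (.inr ⟨k, x, y⟩)))
    have hsat := chain_succ_sat e n
    rw [hn] at hsat
    obtain ⟨u, hu⟩ := hsat
    exact ⟨u, fun j => hu πG πH (hcompat (n + 1)) j⟩

end Main

end HTAux

theorem free_product_of_infinite_countable_admits_faithful_highly_transitive
    (G H : Type*) [Group G] [Group H] [Countable G] [Countable H]
    [Infinite G] [Infinite H] :
    ∃ φ : Coprod G H →* Equiv.Perm ℕ,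
      Function.Injective φ ∧ IsHighlyTransitiveHom φ := by
  obtain ⟨φ, h1, h2⟩ := HTAux.main_construction (G := G) (H := H)
  exact ⟨φ, h1, h2⟩
end

section
/- The infinite dihedral group (Z/2Z) * (Z/2Z) does not admit any faithful highly transitive action on a countable set. -/
open Monoid

namespace InfDihAux

abbrev M2 := Multiplicative (ZMod 2)

/-- the first generator -/
def a : Coprod M2 M2 := Coprod.inl (Multiplicative.ofAdd 1)
/-- the second generator -/
def b : Coprod M2 M2 := Coprod.inr (Multiplicative.ofAdd 1)
/-- the translation -/
def t : Coprod M2 M2 := a * b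

lemma ofAdd_one_sq : (Multiplicative.ofAdd (1 : ZMod 2)) * Multiplicative.ofAdd 1 = 1 := by
  decide

lemma ha : a * a = 1 := by
  rw [a, ← map_mul, ofAdd_one_sq, map_one]

lemma hb : b * b = 1 := by
  rw [b, ← map_mul, ofAdd_one_sq, map_one]

lemma a_inv : a⁻¹ = a := by
  rw [inv_eq_iff_mul_eq_one, ha]

lemma b_inv : b⁻¹ = b := by
  rw [inv_eq_iff_mul_eq_one, hb]

lemma conj_t : a * t * a⁻¹ = t⁻¹ := by
  rw [t, mul_inv_rev, a_inv, b_inv, ← mul_assoc, ha, one_mul]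

lemma conj_t_zpow (n : ℤ) : a * t ^ n * a⁻¹ = t ^ (-n) := by
  have h := map_zpow (MulAut.conj a) t n
  simp only [MulAut.conj_apply, conj_t] at h
  rw [h, inv_zpow, zpow_neg]

lemma t_zpow_mul_a (n : ℤ) : t ^ n * a = a * t ^ (-n) := by
  have h := conj_t_zpow (-n)
  rw [neg_neg] at h
  rw [← h]
  group

lemma m2_cases (m : M2) : m = 1 ∨ m = Multiplicative.ofAdd 1 := by
  revert m; decide

/-- normal form for elements of the infinite dihedral group -/
lemma normal_form (g : Coprod M2 M2) :
    (∃ n : ℤ, g = t ^ n) ∨ (∃ n : ℤ, g = a * t ^ n) := by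
  induction g using Coprod.induction_on with
  | inl m =>
    rcases m2_cases m with rfl | rfl
    · exact Or.inl ⟨0, by simp⟩
    · exact Or.inr ⟨0, by simp [a]⟩
  | inr m =>
    rcases m2_cases m with rfl | rfl
    · exact Or.inl ⟨0, by simp⟩
    · refine Or.inr ⟨1, ?_⟩
      rw [zpow_one, t, ← mul_assoc, ha, one_mul, b]
  | mul x y hx hy =>
    rcases hx with ⟨m, rfl⟩ | ⟨m, rfl⟩ <;> rcases hy with ⟨n, rfl⟩ | ⟨n, rfl⟩
    · left; exact ⟨m + n, by rw [zpow_add]⟩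
    · right
      refine ⟨n - m, ?_⟩
      rw [← mul_assoc, t_zpow_mul_a, mul_assoc, ← zpow_add]
      ring_nf
    · right; exact ⟨m + n, by rw [mul_assoc, ← zpow_add]⟩
    · left
      refine ⟨n - m, ?_⟩
      rw [mul_assoc, ← mul_assoc (t ^ m), t_zpow_mul_a, ← mul_assoc, ← mul_assoc, ha,
        one_mul, ← zpow_add]
      ring_nf

lemma sq_eq_t_zpow (g : Coprod M2 M2) : ∃ n : ℤ, g ^ 2 = t ^ n := by
  rcases normal_form g with ⟨n, rfl⟩ | ⟨n, rfl⟩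
  · exact ⟨n * 2, by rw [← zpow_natCast, ← zpow_mul]; norm_num⟩
  · refine ⟨0, ?_⟩
    rw [sq, mul_assoc, ← mul_assoc (t ^ n), t_zpow_mul_a, ← mul_assoc, ← mul_assoc, ha,
      one_mul, ← zpow_add]
    simp

lemma sq_comm (x y : Coprod M2 M2) : x ^ 2 * y ^ 2 = y ^ 2 * x ^ 2 := by
  obtain ⟨m, hm⟩ := sq_eq_t_zpow x
  obtain ⟨n, hn⟩ := sq_eq_t_zpow y
  rw [hm, hn, ← zpow_add, ← zpow_add, add_comm]

/-- homomorphism onto the dihedral group, to show `t` has infinite order -/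
def fhom : M2 →* DihedralGroup 0 where
  toFun x := if x.toAdd = 0 then 1 else DihedralGroup.sr 0
  map_one' := by decide
  map_mul' := by decide

def ghom : M2 →* DihedralGroup 0 where
  toFun x := if x.toAdd = 0 then 1 else DihedralGroup.sr 1
  map_one' := by decide
  map_mul' := by decide

def ψ : Coprod M2 M2 →* DihedralGroup 0 := Coprod.lift fhom ghom

lemma psi_t : ψ t = DihedralGroup.r 1 := by
  rw [t, map_mul, a, b, ψ]
  simp [Coprod.lift_apply_inl, Coprod.lift_apply_inr, fhom, ghom]

lemma orderOf_t : orderOf t = 0 := by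
  have h := orderOf_map_dvd ψ t
  rw [psi_t, DihedralGroup.orderOf_r_one] at h
  exact Nat.eq_zero_of_zero_dvd h

/-- the 3-cycle (0 1 2) on `Fin 5` -/
def c1 : Fin 5 ≃ Fin 5 :=
  ⟨![1, 2, 0, 3, 4], ![2, 0, 1, 3, 4], by decide, by decide⟩

/-- the 3-cycle (2 3 4) on `Fin 5` -/
def c2 : Fin 5 ≃ Fin 5 :=
  ⟨![0, 1, 3, 4, 2], ![0, 1, 4, 2, 3], by decide, by decide⟩

end InfDihAux

open InfDihAux in
theorem infinite_dihedral_no_faithful_highly_transitive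
    (X : Type*) [Countable X]
    (φ : Coprod (Multiplicative (ZMod 2)) (Multiplicative (ZMod 2)) →* Equiv.Perm X) :
    ¬ (Function.Injective φ ∧ IsHighlyTransitiveHom φ) := by
  rintro ⟨hinj, htrans⟩
  -- X is infinite since φ t has infinite order
  have hX : Infinite X := by
    by_contra h
    have : Finite X := not_infinite_iff_finite.mp h
    have hfin : Finite (Equiv.Perm X) := inferInstance
    have h1 : orderOf (φ t) = orderOf t := orderOf_injective φ hinj t
    rw [orderOf_t] at h1
    exact (orderOf_pos (φ t)).ne' h1
  classical
  let e : Fin 5 ↪ X := Fin.valEmbedding.trans (Infinite.natEmbedding X)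
  obtain ⟨w1, hw1⟩ := htrans 5 e (c1.toEmbedding.trans e)
  obtain ⟨w2, hw2⟩ := htrans 5 e (c2.toEmbedding.trans e)
  have hw1' : ∀ i, φ w1 (e i) = e (c1 i) := by
    intro i; simpa using hw1 i
  have hw2' : ∀ i, φ w2 (e i) = e (c2 i) := by
    intro i; simpa using hw2 i
  have key := sq_comm w1 w2
  have h0 := congrArg (fun g => φ g (e 0)) key
  simp only [map_mul, map_pow, Equiv.Perm.mul_apply, pow_two] at h0
  have e1 : φ w2 (e 0) = e 0 := by simpa [c2] using hw2' 0
  have e2 : φ w1 (e 0) = e 1 := by simpa [c1] using hw1' 0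
  have e3 : φ w1 (e 1) = e 2 := by simpa [c1] using hw1' 1
  have e4 : φ w2 (e 2) = e 3 := by simpa [c2] using hw2' 2
  have e5 : φ w2 (e 3) = e 4 := by simpa [c2] using hw2' 3
  rw [e1, e1, e2, e3, e4, e5] at h0
  have : (2 : Fin 5) = 4 := e.injective h0
  exact absurd this (by decide)
end
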